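/- In the setting of the previous statement (group Lasso, y = Xβ* + W, (1/(nT))‖XᵀW‖_{2,∞} ≤ λ/2), let φ_max be the largest eigenvalue of XᵀX/n. Then the number of nonzero blocks of any minimizer β̂ satisfies M(β̂) ≤ (4 φ_max/(λ² n T²)) · ‖X(β̂ − β*)‖², where M(β̂) = |{j : β̂^j ≠ 0}|. -/

import Mathlib

open scoped BigOperators Classical
open Matrix

noncomputable def blk {M T : ℕ} (β : Fin M × Fin T → ℝ) (j : Fin M) :
    EuclideanSpace ℝ (Fin T) := WithLp.toLp 2 (fun t => β (j, t))

noncomputable def norm21 {M T : ℕ} (β : Fin M × Fin T → ℝ) : ℝ := ∑ j, ‖blk β j‖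

noncomputable def norm2inf {M T : ℕ} (β : Fin M × Fin T → ℝ) : ℝ :=
  ‖(fun j => ‖blk β j‖ : Fin M → ℝ)‖

/-! For an active block `j`, the first-order optimality condition gives
`(1/(nT)) ‖(Xᵀ(y - Xβ̂))ʲ‖ ≥ λ`. Since `y - Xβ̂ = W - XΔ` with `Δ = β̂ - β*` and the noise part is
at most `λ/2`, we get `(1/(nT)) ‖(XᵀXΔ)ʲ‖ ≥ λ/2` for every active block. Summing squares over the
active blocks bounds their number by `(2nT/λ)² ‖XᵀXΔ‖²`, and
`‖XᵀXΔ‖² = ⟪XXᵀXΔ, XΔ⟫ ≤ √(n φ_max) ‖XᵀXΔ‖ ‖XΔ‖` gives `‖XᵀXΔ‖² ≤ n φ_max ‖XΔ‖²`. -/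

theorem nonpos_of_forall_neg_mul_add_nonneg {p q : ℝ}
    (h : ∀ ε, -1 ≤ ε → ε < 0 → 0 ≤ ε * (p + ε * q)) : p ≤ 0 := by
  have hlim : Filter.Tendsto (fun ε => p + ε * q) (nhdsWithin 0 (Set.Iio 0)) (nhds p) := by
    have : Continuous fun ε : ℝ => p + ε * q := by fun_prop
    simpa using (this.tendsto 0).mono_left nhdsWithin_le_nhds
  refine le_of_tendsto hlim ?_
  filter_upwards [Ioo_mem_nhdsLT (show (-1 : ℝ) < 0 by norm_num)] with ε hε
  exact nonpos_of_mul_nonneg_right (h ε hε.1.le hε.2) hε.2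

theorem sum_sq_mulVec_add_smul_sub {ι κ : Type*} [Fintype ι] [Fintype κ]
    (X : Matrix ι κ ℝ) (y : ι → ℝ) (β e : κ → ℝ) (ε : ℝ) :
    ∑ i, ((X *ᵥ (β + ε • e)) i - y i) ^ 2 =
      ∑ i, ((X *ᵥ β) i - y i) ^ 2 +
        ε * (2 * ((X *ᵥ e) ⬝ᵥ (X *ᵥ β - y)) + ε * ((X *ᵥ e) ⬝ᵥ (X *ᵥ e))) := by
  simp only [mulVec_add, mulVec_smul, dotProduct, Finset.mul_sum, ← Finset.sum_add_distrib]
  refine Finset.sum_congr rfl fun i _ => ?_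
  simp only [Pi.add_apply, Pi.smul_apply, Pi.sub_apply, smul_eq_mul]
  ring

theorem sum_sq_mulVec_transpose_mulVec_le {ι κ : Type*} [Fintype ι] [Fintype κ]
    (X : Matrix ι κ ℝ) {K : ℝ} (hK : ∀ v, ∑ i, (X *ᵥ v) i ^ 2 ≤ K * ∑ x, v x ^ 2)
    (v : κ → ℝ) :
    ∑ x, (Xᵀ *ᵥ X *ᵥ v) x ^ 2 ≤ K * ∑ i, (X *ᵥ v) i ^ 2 := by
  set F := Xᵀ *ᵥ X *ᵥ v
  set S := ∑ x, F x ^ 2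
  set E := ∑ i, (X *ᵥ v) i ^ 2
  have hE : 0 ≤ E := by positivity
  have hS : 0 ≤ S := by positivity
  have hKE : 0 ≤ K * E := by
    rcases hE.eq_or_lt with hE0 | hEpos
    · simp [← hE0]
    · have : 0 < K * ∑ x, v x ^ 2 := hEpos.trans_le (hK v)
      exact mul_nonneg (pos_of_mul_pos_left this (by positivity)).le hE
  have hCS : S ^ 2 ≤ K * S * E :=
    calc S ^ 2 = (∑ i, (X *ᵥ F) i * (X *ᵥ v) i) ^ 2 := by
          rw [← dotProduct, dotProduct_comm, ← dotProduct_transpose_mulVec, dotProduct]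
          simp only [S, F, sq]
      _ ≤ (∑ i, (X *ᵥ F) i ^ 2) * E := Finset.sum_mul_sq_le_sq_mul_sq _ _ _
      _ ≤ K * S * E := mul_le_mul_of_nonneg_right (hK F) hE
  rcases hS.eq_or_lt with hS0 | hSpos
  · rwa [← hS0]
  · nlinarith

section Blocks

variable {M T : ℕ}

@[simp]
theorem blk_apply (β : Fin M × Fin T → ℝ) (j : Fin M) (t : Fin T) : blk β j t = β (j, t) := rfl

theorem blk_sub (β γ : Fin M × Fin T → ℝ) (j : Fin M) : blk (β - γ) j = blk β j - blk γ j := by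
  ext t; simp

theorem norm_blk_le_norm2inf (β : Fin M × Fin T → ℝ) (j : Fin M) : ‖blk β j‖ ≤ norm2inf β := by
  simpa [norm2inf] using norm_le_pi_norm (fun j => ‖blk β j‖) j

theorem sum_norm_blk_sq (β : Fin M × Fin T → ℝ) : ∑ j, ‖blk β j‖ ^ 2 = ∑ p, β p ^ 2 := by
  simp [EuclideanSpace.norm_sq_eq, Fintype.sum_prod_type]

def restrictBlock (β : Fin M × Fin T → ℝ) (j : Fin M) : Fin M × Fin T → ℝ :=
  fun p => if p.1 = j then β p else 0

theorem restrictBlock_dotProduct (β v : Fin M × Fin T → ℝ) (j : Fin M) :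
    restrictBlock β j ⬝ᵥ v = inner ℝ (blk β j) (blk v j) := by
  rw [dotProduct, Fintype.sum_prod_type,
    Fintype.sum_eq_single j fun k hk => by simp [restrictBlock, hk]]
  simp [restrictBlock, PiLp.inner_apply, mul_comm]

theorem blk_add_smul_restrictBlock (β : Fin M × Fin T → ℝ) (j k : Fin M) (ε : ℝ) :
    blk (β + ε • restrictBlock β j) k = if k = j then (1 + ε) • blk β k else blk β k := by
  ext t
  split_ifs with hk <;> simp [restrictBlock, hk]
  ring

theorem norm21_add_smul_restrictBlock (β : Fin M × Fin T → ℝ) (j : Fin M) {ε : ℝ}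
    (hε : -1 ≤ ε) :
    norm21 (β + ε • restrictBlock β j) = norm21 β + ε * ‖blk β j‖ := by
  have hblk : ∀ k, ‖blk (β + ε • restrictBlock β j) k‖ =
      ‖blk β k‖ + if k = j then ε * ‖blk β j‖ else 0 := by
    intro k
    rw [blk_add_smul_restrictBlock]
    split_ifs with hk
    · rw [hk, norm_smul, Real.norm_of_nonneg (by linarith)]
      ring
    · simp
  simp [norm21, hblk, Finset.sum_add_distrib]

theorem card_mul_sq_le_sum_sq {β F : Fin M × Fin T → ℝ} {a c : ℝ} (ha : 0 ≤ a)
    (h : ∀ j, blk β j ≠ 0 → a ≤ c * ‖blk F j‖) :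
    ((Finset.univ.filter fun j => blk β j ≠ 0).card : ℝ) * a ^ 2 ≤ c ^ 2 * ∑ p, F p ^ 2 := by
  rw [← sum_norm_blk_sq, Finset.mul_sum]
  calc _ = ∑ j ∈ Finset.univ.filter fun j => blk β j ≠ 0, a ^ 2 := by simp
    _ ≤ ∑ j ∈ Finset.univ.filter fun j => blk β j ≠ 0, c ^ 2 * ‖blk F j‖ ^ 2 :=
      Finset.sum_le_sum fun j hj => by
        rw [← mul_pow]
        exact pow_le_pow_left₀ ha (h j (Finset.mem_filter.mp hj).2) 2
    _ ≤ _ := Finset.sum_le_sum_of_subset_of_nonneg (Finset.subset_univ _) fun _ _ _ => by positivity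

end Blocks

theorem le_mul_norm_blk_residual_of_minimizer {ι : Type*} [Fintype ι] {M T : ℕ}
    (X : Matrix ι (Fin M × Fin T) ℝ) (y : ι → ℝ) {c lam : ℝ} (hc : 0 ≤ c)
    {βhat : Fin M × Fin T → ℝ}
    (hmin : ∀ β, c * ∑ i, ((X *ᵥ βhat) i - y i) ^ 2 + 2 * lam * norm21 βhat ≤
      c * ∑ i, ((X *ᵥ β) i - y i) ^ 2 + 2 * lam * norm21 β)
    {j : Fin M} (hj : blk βhat j ≠ 0) :
    lam ≤ c * ‖blk (Xᵀ *ᵥ (y - X *ᵥ βhat)) j‖ := by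
  set e := restrictBlock βhat j
  set G := Xᵀ *ᵥ (y - X *ᵥ βhat)
  -- Rescaling block `j` by `1 + ε` with `ε < 0` cannot decrease the objective; letting `ε → 0⁻`
  -- gives the one-sided KKT inequality for that block.
  have hfirst : 2 * c * ((X *ᵥ e) ⬝ᵥ (X *ᵥ βhat - y)) + 2 * lam * ‖blk βhat j‖ ≤ 0 := by
    refine nonpos_of_forall_neg_mul_add_nonneg (q := c * ((X *ᵥ e) ⬝ᵥ (X *ᵥ e)))
      fun ε hε _ => ?_
    have := hmin (βhat + ε • e)
    rw [sum_sq_mulVec_add_smul_sub, norm21_add_smul_restrictBlock _ _ hε] at this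
    linarith
  have hcross : (X *ᵥ e) ⬝ᵥ (X *ᵥ βhat - y) = -inner ℝ (blk βhat j) (blk G j) := by
    rw [dotProduct_comm, ← dotProduct_transpose_mulVec, ← neg_sub, mulVec_neg, dotProduct_neg,
      restrictBlock_dotProduct]
  have hinner : lam * ‖blk βhat j‖ ≤ c * inner ℝ (blk βhat j) (blk G j) := by
    rw [hcross] at hfirst
    linarith
  have hscaled : lam * ‖blk βhat j‖ ≤ c * ‖blk G j‖ * ‖blk βhat j‖ :=
    calc lam * ‖blk βhat j‖ ≤ c * inner ℝ (blk βhat j) (blk G j) := hinner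
      _ ≤ c * (‖blk βhat j‖ * ‖blk G j‖) :=
        mul_le_mul_of_nonneg_left (real_inner_le_norm _ _) hc
      _ = c * ‖blk G j‖ * ‖blk βhat j‖ := by ring
  exact le_of_mul_le_mul_right hscaled (norm_pos_iff.mpr hj)

theorem stmt_13_general (n T M : ℕ)
    (X : Matrix (Fin (n * T)) (Fin M × Fin T) ℝ)
    (βstar βhat : Fin M × Fin T → ℝ) (W : Fin (n * T) → ℝ)
    (y : Fin (n * T) → ℝ) (hy : y = X.mulVec βstar + W)
    (lam : ℝ) (hlam : 0 < lam)
    (hmin : ∀ β : Fin M × Fin T → ℝ,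
        (1 / (n * T : ℝ)) * ∑ i, (X.mulVec βhat i - y i) ^ 2 +
          2 * lam * norm21 βhat ≤
        (1 / (n * T : ℝ)) * ∑ i, (X.mulVec β i - y i) ^ 2 + 2 * lam * norm21 β)
    (hW : (1 / (n * T : ℝ)) * norm2inf (Xᵀ.mulVec W) ≤ lam / 2)
    (φmax : ℝ)
    (hφ : ∀ v : Fin M × Fin T → ℝ,
        ∑ i, (X.mulVec v i) ^ 2 ≤ φmax * n * ∑ x, (v x) ^ 2) :
    ((Finset.univ.filter (fun j => blk βhat j ≠ 0)).card : ℝ) ≤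
      (4 * φmax / (lam ^ 2 * n * (T : ℝ) ^ 2)) *
        ∑ i, (X.mulVec βhat i - X.mulVec βstar i) ^ 2 := by
  set c : ℝ := 1 / (n * T : ℝ)
  have hc : 0 ≤ c := by positivity
  set F := Xᵀ *ᵥ X *ᵥ (βhat - βstar)
  have hactive : ∀ j, blk βhat j ≠ 0 → lam / 2 ≤ c * ‖blk F j‖ := by
    intro j hj
    have hkkt := le_mul_norm_blk_residual_of_minimizer X y hc hmin hj
    have hresid : y - X *ᵥ βhat = W - X *ᵥ (βhat - βstar) := by
      rw [hy, mulVec_sub]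
      abel
    rw [hresid, mulVec_sub, blk_sub] at hkkt
    have hnoise := mul_le_mul_of_nonneg_left (norm_blk_le_norm2inf (Xᵀ *ᵥ W) j) hc
    have htriangle := mul_le_mul_of_nonneg_left (norm_sub_le (blk (Xᵀ *ᵥ W) j) (blk F j)) hc
    linarith
  have hcount := card_mul_sq_le_sum_sq (by positivity) hactive
  have hspectral := sum_sq_mulVec_transpose_mulVec_le X hφ (βhat - βstar)
  have hscale : c ^ 2 * n = 1 / (n * T ^ 2) := by
    rcases eq_or_ne (n : ℝ) 0 with hn | hn
    · simp [c, hn]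
    · rw [div_pow, mul_pow]
      field_simp
  set E := ∑ i, (X.mulVec βhat i - X.mulVec βstar i) ^ 2
  have hE : ∑ i, (X *ᵥ (βhat - βstar)) i ^ 2 = E := by simp [E, mulVec_sub]
  rw [hE] at hspectral
  calc _ ≤ (c ^ 2 * ∑ p, F p ^ 2) / (lam / 2) ^ 2 := (le_div_iff₀ (by positivity)).mpr hcount
    _ ≤ c ^ 2 * (φmax * n * E) / (lam / 2) ^ 2 := by gcongr
    _ = c ^ 2 * n * φmax * E / (lam / 2) ^ 2 := by ring
    _ = 4 * φmax / (lam ^ 2 * n * T ^ 2) * E := by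
      rw [hscale]
      field_simp
      ring

theorem stmt_13 (n T M : ℕ) (hn : 0 < n) (hT : 0 < T)
    (X : Matrix (Fin (n * T)) (Fin M × Fin T) ℝ)
    (βstar βhat : Fin M × Fin T → ℝ) (W : Fin (n * T) → ℝ)
    (y : Fin (n * T) → ℝ) (hy : y = X.mulVec βstar + W)
    (lam : ℝ) (hlam : 0 < lam)
    (hmin : ∀ β : Fin M × Fin T → ℝ,
        (1 / (n * T : ℝ)) * ∑ i, (X.mulVec βhat i - y i) ^ 2 +
          2 * lam * norm21 βhat ≤
        (1 / (n * T : ℝ)) * ∑ i, (X.mulVec β i - y i) ^ 2 + 2 * lam * norm21 β)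
    (hW : (1 / (n * T : ℝ)) * norm2inf (Xᵀ.mulVec W) ≤ lam / 2)
    (φmax : ℝ)
    (hφ : ∀ v : Fin M × Fin T → ℝ,
        ∑ i, (X.mulVec v i) ^ 2 ≤ φmax * n * ∑ x, (v x) ^ 2) :
    ((Finset.univ.filter (fun j => blk βhat j ≠ 0)).card : ℝ) ≤
      (4 * φmax / (lam ^ 2 * n * (T : ℝ) ^ 2)) *
        ∑ i, (X.mulVec βhat i - X.mulVec βstar i) ^ 2 :=
  stmt_13_general n T M X βstar βhat W y hy lam hlam hmin hW φmax hφ
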